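/- Let f : [0,1] → ℝ be the tent map f(t) = 2t for t ≤ 1/2 and f(t) = 2(1−t) for t ≥ 1/2, let H be the operator sending w to (Hw)(t) = w(2t) for t ≤ 1/2 and −w(2t−1) for t ≥ 1/2, and define h(x) = ∫₀ˣ ((x−t)⁵/5!) (H⁵f)(t) dt for x ∈ [0,1]. Then h is C⁶ on [0,1], h⁽ʲ⁾(1) = 0 for every integer 1 ≤ j ≤ 6, and h(1) = 2^{−21}. -/

import Mathlib

/-- The operator `H`: `(Hw)(t) = w(2t)` for `t ≤ 1/2` and `(Hw)(t) = -w(2t-1)` for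
`t ≥ 1/2`. -/
noncomputable def Hop (w : ℝ → ℝ) : ℝ → ℝ :=
  fun t => if t ≤ 1 / 2 then w (2 * t) else -w (2 * t - 1)

/-- The tent map: `f(t) = 2t` for `t ≤ 1/2` and `f(t) = 2(1-t)` for `t ≥ 1/2`. -/
noncomputable def tent : ℝ → ℝ :=
  fun t => if t ≤ 1 / 2 then 2 * t else 2 * (1 - t)

/-- `h(x) = ∫₀ˣ ((x-t)⁵/5!) (H⁵f)(t) dt`. -/
noncomputable def hFun : ℝ → ℝ :=
  fun x => ∫ t in (0 : ℝ)..x, ((x - t) ^ 5 / 120) * (Hop^[5] tent) t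

/-!
Write `g = H⁵f`. By Cauchy's formula for repeated integration, `h` is the sixfold primitive of
`g` vanishing to order six at `0`, so `h⁽ʲ⁾(1) = ∫₀¹ (1-t)^(5-j)/(5-j)! g(t) dt` for `j ≤ 5` and
`h⁽⁶⁾ = g`; everything reduces to the moments `∫₀¹ tⁱ g(t) dt`.

The substitutions `t = s/2` and `t = (s+1)/2` give
`∫₀¹ p (Hw) = ½ ∫₀¹ (p(s/2) - p((s+1)/2)) w(s) ds`, and `(s/2)ⁱ - ((s+1)/2)ⁱ` has degree `i - 1`
with leading coefficient `-i/2ⁱ`. Hence `Hⁿf` is orthogonal to all polynomials of degree `< n`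
and its `n`-th moment is `(-1)ⁿ n! / 2^C(n+2,2)`. For `n = 5` this kills `h⁽ʲ⁾(1)`, `j ≥ 1`,
and leaves `h(1) = -∫₀¹ t⁵ g / 5! = 2⁻²¹`.
-/

open intervalIntegral Finset Nat

/-- Cauchy's formula: the `(n + 1)`-fold iterated primitive of `g` vanishing at `0`. -/
noncomputable def iterIntegral (n : ℕ) (g : ℝ → ℝ) (x : ℝ) : ℝ :=
  ∫ t in (0 : ℝ)..x, (x - t) ^ n / n ! * g t

section iterIntegral

variable {g : ℝ → ℝ}

theorem iterIntegral_succ (hg : Continuous g) (n : ℕ) (x : ℝ) :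
    iterIntegral (n + 1) g x =
      (x * iterIntegral n g x - iterIntegral n (fun t ↦ t * g t) x) / (n + 1) := by
  simp only [iterIntegral]
  rw [← integral_const_mul, ← integral_sub (by apply Continuous.intervalIntegrable; fun_prop)
    (by apply Continuous.intervalIntegrable; fun_prop), ← integral_div]
  refine integral_congr fun t _ ↦ ?_
  push_cast [factorial_succ]
  field_simp
  ring

theorem hasDerivAt_iterIntegral_zero (hg : Continuous g) (x : ℝ) :
    HasDerivAt (iterIntegral 0 g) (g x) x := by
  have h : iterIntegral 0 g = fun x ↦ ∫ t in (0 : ℝ)..x, g t := by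
    funext x; simp [iterIntegral]
  exact h ▸ (hg.integral_hasStrictDerivAt 0 x).hasDerivAt

-- `iterIntegral_succ` expresses the kernel of degree `n + 1` through that of degree `n`, but
-- applied to both `g` and `t * g t`; hence the induction runs over all continuous `g`.
theorem hasDerivAt_iterIntegral_succ (hg : Continuous g) (n : ℕ) (x : ℝ) :
    HasDerivAt (iterIntegral (n + 1) g) (iterIntegral n g x) x := by
  induction n generalizing g x with
  | zero =>
    have htg : Continuous fun t ↦ t * g t := by fun_prop
    rw [funext (iterIntegral_succ hg 0)]
    refine ((((hasDerivAt_id x).mul (hasDerivAt_iterIntegral_zero hg x)).sub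
      (hasDerivAt_iterIntegral_zero htg x)).div_const _).congr_deriv ?_
    simp
  | succ n ih =>
    have htg : Continuous fun t ↦ t * g t := by fun_prop
    rw [funext (iterIntegral_succ hg (n + 1))]
    refine ((((hasDerivAt_id x).mul (ih hg x)).sub (ih htg x)).div_const _).congr_deriv ?_
    rw [iterIntegral_succ hg n, id]
    push_cast
    field_simp
    ring

theorem iteratedDeriv_iterIntegral (hg : Continuous g) {k n : ℕ} (hk : k ≤ n) :
    iteratedDeriv k (iterIntegral n g) = iterIntegral (n - k) g := by
  induction k with
  | zero => simp
  | succ k ih =>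
    rw [iteratedDeriv_succ, ih (by omega), show n - k = n - (k + 1) + 1 by omega]
    exact funext fun x ↦ (hasDerivAt_iterIntegral_succ hg _ x).deriv

theorem iteratedDeriv_succ_iterIntegral (hg : Continuous g) (n : ℕ) :
    iteratedDeriv (n + 1) (iterIntegral n g) = g := by
  rw [iteratedDeriv_succ, iteratedDeriv_iterIntegral hg le_rfl, Nat.sub_self]
  exact funext fun x ↦ (hasDerivAt_iterIntegral_zero hg x).deriv

theorem contDiff_iterIntegral (hg : Continuous g) (n : ℕ) :
    ContDiff ℝ (n + 1) (iterIntegral n g) := by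
  induction n with
  | zero =>
    have hd : deriv (iterIntegral 0 g) = g :=
      funext fun x ↦ (hasDerivAt_iterIntegral_zero hg x).deriv
    simpa [contDiff_one_iff_deriv, hd] using
      ⟨fun x ↦ (hasDerivAt_iterIntegral_zero hg x).differentiableAt, hg⟩
  | succ n ih =>
    have hd : deriv (iterIntegral (n + 1) g) = iterIntegral n g :=
      funext fun x ↦ (hasDerivAt_iterIntegral_succ hg n x).deriv
    push_cast
    exact contDiff_succ_iff_deriv.mpr
      ⟨fun x ↦ (hasDerivAt_iterIntegral_succ hg n x).differentiableAt, by simp, hd ▸ ih⟩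

end iterIntegral

theorem continuous_tent : Continuous tent :=
  Continuous.if_le (by fun_prop) (by fun_prop) continuous_id continuous_const
    fun x hx ↦ by subst hx; norm_num

section Hop

variable {w : ℝ → ℝ}

theorem Hop_apply_zero : Hop w 0 = w 0 := by simp [Hop]

theorem Hop_apply_one : Hop w 1 = -w 1 := by norm_num [Hop]

theorem continuous_Hop (hw : Continuous w) (h0 : w 0 = 0) (h1 : w 1 = 0) :
    Continuous (Hop w) :=
  Continuous.if_le (by fun_prop) (by fun_prop) continuous_id continuous_const
    fun x hx ↦ by subst hx; norm_num [h0, h1]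

theorem integral_mul_Hop (hw : Continuous w) (h0 : w 0 = 0) (h1 : w 1 = 0) {p : ℝ → ℝ}
    (hp : Continuous p) :
    ∫ t in (0 : ℝ)..1, p t * Hop w t =
      ((∫ s in (0 : ℝ)..1, p (s / 2) * w s) - ∫ s in (0 : ℝ)..1, p ((s + 1) / 2) * w s) / 2 := by
  have hint : ∀ a b : ℝ, IntervalIntegrable (fun t ↦ p t * Hop w t) MeasureTheory.volume a b :=
    fun a b ↦ (hp.mul (continuous_Hop hw h0 h1)).intervalIntegrable a b
  rw [← integral_add_adjacent_intervals (hint 0 (1 / 2)) (hint (1 / 2) 1)]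
  have hleft : ∫ t in (0 : ℝ)..1 / 2, p t * Hop w t
      = ∫ t in (0 : ℝ)..1 / 2, (fun s ↦ p (s / 2) * w s) (2 * t) := by
    refine integral_congr fun t ht ↦ ?_
    rw [Set.uIcc_of_le (by norm_num)] at ht
    simp only [Hop, if_pos ht.2]
    ring_nf
  -- at `t = 1/2` the two branches of `Hop w` agree because `w 0 = w 1 = 0`
  have hright : ∫ t in (1 / 2 : ℝ)..1, p t * Hop w t
      = -∫ t in (1 / 2 : ℝ)..1, (fun s ↦ p ((s + 1) / 2) * w s) (2 * t + -1) := by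
    rw [← integral_neg]
    refine integral_congr fun t ht ↦ ?_
    rw [Set.uIcc_of_le (by norm_num)] at ht
    rcases ht.1.eq_or_lt with rfl | ht'
    · norm_num [Hop, h0, h1]
    · simp only [Hop, if_neg (not_le.mpr ht')]
      ring_nf
  rw [hleft, hright, integral_comp_mul_left (fun s ↦ p (s / 2) * w s) two_ne_zero,
    integral_comp_mul_add (fun s ↦ p ((s + 1) / 2) * w s) two_ne_zero]
  norm_num
  ring

end Hop

theorem iterate_Hop_tent_zero (n : ℕ) : (Hop^[n] tent) 0 = 0 := by
  induction n with
  | zero => simp [tent]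
  | succ n ih => rw [Function.iterate_succ_apply', Hop_apply_zero, ih]

theorem iterate_Hop_tent_one (n : ℕ) : (Hop^[n] tent) 1 = 0 := by
  induction n with
  | zero => norm_num [tent]
  | succ n ih => rw [Function.iterate_succ_apply', Hop_apply_one, ih, neg_zero]

theorem continuous_iterate_Hop_tent (n : ℕ) : Continuous (Hop^[n] tent) := by
  induction n with
  | zero => exact continuous_tent
  | succ n ih =>
    rw [Function.iterate_succ']
    exact continuous_Hop ih (iterate_Hop_tent_zero n) (iterate_Hop_tent_one n)

noncomputable def unitMoment (w : ℝ → ℝ) (i : ℕ) : ℝ := ∫ t in (0 : ℝ)..1, t ^ i * w t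

theorem integral_add_pow_mul_eq_sum {w : ℝ → ℝ} (hw : Continuous w) (a : ℝ) (i : ℕ) :
    ∫ t in (0 : ℝ)..1, (t + a) ^ i * w t =
      ∑ j ∈ range (i + 1), a ^ (i - j) * i.choose j * unitMoment w j := by
  simp_rw [add_pow, sum_mul]
  rw [integral_finsetSum fun j _ ↦ by apply Continuous.intervalIntegrable; fun_prop]
  refine sum_congr rfl fun j _ ↦ ?_
  rw [unitMoment, ← integral_const_mul]
  exact integral_congr fun t _ ↦ by ring

theorem unitMoment_Hop {w : ℝ → ℝ} (hw : Continuous w) (h0 : w 0 = 0) (h1 : w 1 = 0)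
    (i : ℕ) :
    unitMoment (Hop w) i = -(∑ j ∈ range i, i.choose j * unitMoment w j) / 2 ^ (i + 1) := by
  have hhalf : ∫ s in (0 : ℝ)..1, (s / 2) ^ i * w s = unitMoment w i / 2 ^ i := by
    rw [unitMoment, ← integral_div]
    exact integral_congr fun s _ ↦ by rw [div_pow]; ring
  have hshift : ∫ s in (0 : ℝ)..1, ((s + 1) / 2) ^ i * w s
      = (∑ j ∈ range (i + 1), i.choose j * unitMoment w j) / 2 ^ i := by
    have h := integral_add_pow_mul_eq_sum hw 1 i
    simp only [one_pow, one_mul] at h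
    rw [← h, ← integral_div]
    exact integral_congr fun s _ ↦ by rw [div_pow]; ring
  rw [unitMoment, integral_mul_Hop hw h0 h1 (continuous_pow i), hhalf, hshift, sum_range_succ,
    Nat.choose_self]
  field_simp
  ring

theorem unitMoment_iterate_Hop_tent_of_lt {n j : ℕ} (hj : j < n) :
    unitMoment (Hop^[n] tent) j = 0 := by
  induction n generalizing j with
  | zero => omega
  | succ n ih =>
    rw [Function.iterate_succ_apply', unitMoment_Hop (continuous_iterate_Hop_tent n)
      (iterate_Hop_tent_zero n) (iterate_Hop_tent_one n),
      sum_eq_zero fun k hk ↦ by rw [ih (by simp at hk; omega), mul_zero]]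
    simp

theorem unitMoment_tent_zero : unitMoment tent 0 = 1 / 2 := by
  simp only [unitMoment, pow_zero, one_mul]
  rw [← integral_add_adjacent_intervals (continuous_tent.intervalIntegrable 0 (1 / 2))
    (continuous_tent.intervalIntegrable (1 / 2) 1)]
  have hleft : ∫ t in (0 : ℝ)..1 / 2, tent t = ∫ t in (0 : ℝ)..1 / 2, 2 * t := by
    refine integral_congr fun t ht ↦ ?_
    rw [Set.uIcc_of_le (by norm_num)] at ht
    simp only [tent, if_pos ht.2]
  have hright : ∫ t in (1 / 2 : ℝ)..1, tent t = ∫ t in (1 / 2 : ℝ)..1, 2 * (1 - t) := by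
    refine integral_congr fun t ht ↦ ?_
    rw [Set.uIcc_of_le (by norm_num)] at ht
    rcases ht.1.eq_or_lt with rfl | ht'
    · norm_num [tent]
    · simp only [tent, if_neg (not_le.mpr ht')]
  rw [hleft, hright, integral_const_mul, integral_const_mul, integral_comp_sub_left (fun x ↦ x),
    integral_id, integral_id]
  norm_num

theorem unitMoment_iterate_Hop_tent_self (n : ℕ) :
    unitMoment (Hop^[n] tent) n = (-1) ^ n * n ! / 2 ^ (n + 2).choose 2 := by
  induction n with
  | zero => simp [unitMoment_tent_zero]
  | succ n ih =>
    rw [Function.iterate_succ_apply', unitMoment_Hop (continuous_iterate_Hop_tent n)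
      (iterate_Hop_tent_zero n) (iterate_Hop_tent_one n), sum_range_succ,
      sum_eq_zero fun k hk ↦ by rw [unitMoment_iterate_Hop_tent_of_lt (by simpa using hk),
        mul_zero], ih, Nat.choose_succ_self_right, Nat.choose_succ_succ (n + 2) 1,
      Nat.choose_one_right, factorial_succ]
    push_cast
    rw [pow_add]
    field_simp
    ring

theorem iterIntegral_apply_one {g : ℝ → ℝ} (hg : Continuous g) (k : ℕ) :
    iterIntegral k g 1 = (-1) ^ k / k ! *
      ∑ j ∈ range (k + 1), (-1) ^ (k - j) * k.choose j * unitMoment g j := by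
  rw [← integral_add_pow_mul_eq_sum hg, ← integral_const_mul, iterIntegral]
  exact integral_congr fun t _ ↦ by
    rw [show 1 - t = -1 * (t + -1) by ring, mul_pow]; ring

theorem iterIntegral_apply_one_of_lt {g : ℝ → ℝ} (hg : Continuous g) {k n : ℕ}
    (hmom : ∀ j < n, unitMoment g j = 0) (hk : k < n) : iterIntegral k g 1 = 0 := by
  rw [iterIntegral_apply_one hg, sum_eq_zero fun j hj ↦ by
    rw [hmom j (by simp at hj; omega), mul_zero], mul_zero]

theorem iterIntegral_apply_one_self {g : ℝ → ℝ} (hg : Continuous g) {n : ℕ}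
    (hmom : ∀ j < n, unitMoment g j = 0) :
    iterIntegral n g 1 = (-1) ^ n / n ! * unitMoment g n := by
  rw [iterIntegral_apply_one hg, sum_range_succ, sum_eq_zero fun j hj ↦ by
    rw [hmom j (by simpa using hj), mul_zero]]
  simp

theorem iterIntegral_iterate_Hop_tent_apply_one (n : ℕ) :
    iterIntegral n (Hop^[n] tent) 1 = 1 / 2 ^ (n + 2).choose 2 := by
  rw [iterIntegral_apply_one_self (continuous_iterate_Hop_tent n)
    fun j ↦ unitMoment_iterate_Hop_tent_of_lt, unitMoment_iterate_Hop_tent_self]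
  field_simp
  rw [← pow_mul, mul_comm, pow_mul]
  norm_num

/-- `h` is `C⁶` on `[0,1]`, its derivatives of order `1 ≤ j ≤ 6` vanish at
`1`, and `h(1) = 2⁻²¹`. -/
theorem stmt8 :
    ContDiffOn ℝ 6 hFun (Set.Icc 0 1) ∧
    (∀ j : ℕ, 1 ≤ j → j ≤ 6 → iteratedDerivWithin j hFun (Set.Icc 0 1) 1 = 0) ∧
    hFun 1 = (2 : ℝ) ^ (-21 : ℤ) := by
  have hg := continuous_iterate_Hop_tent 5
  have hh : hFun = iterIntegral 5 (Hop^[5] tent) := by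
    funext x
    simp [hFun, iterIntegral, factorial]
  have hC : ContDiff ℝ 6 hFun := hh ▸ contDiff_iterIntegral hg 5
  refine ⟨hC.contDiffOn, fun j _ hj6 ↦ ?_, ?_⟩
  · rw [iteratedDerivWithin_eq_iteratedDeriv (uniqueDiffOn_Icc zero_lt_one)
      (hC.contDiffAt.of_le (by exact_mod_cast hj6)) (by norm_num), hh]
    obtain hj | rfl := hj6.lt_or_eq
    · rw [iteratedDeriv_iterIntegral hg (by omega : j ≤ 5)]
      exact iterIntegral_apply_one_of_lt hg (fun i ↦ unitMoment_iterate_Hop_tent_of_lt)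
        (by omega : 5 - j < 5)
    · rw [iteratedDeriv_succ_iterIntegral hg]
      exact iterate_Hop_tent_one 5
  · rw [hh, iterIntegral_iterate_Hop_tent_apply_one, show (7 : ℕ).choose 2 = 21 from rfl]
    norm_num
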